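/- arXiv:1501.07762 — 2 statements merged into one kernel-verified Lean document; each statement's English description precedes it below -/
import Mathlib

section
/- For every x ∈ X that does not lie in (the image of) A, the intersection A ∩ xAx⁻¹ contains no element of order q; symmetrically, for every y ∈ X not lying in B, the intersection B ∩ yBy⁻¹ contains no element of order p. -/
/-- The two-element family of groups `A` (at `true`) and `B` (at `false`),
used to express the amalgamated free product `A *_C B` as a pushout. -/
def AmalgamFam (A B : Type) : Bool → Type
  | true => A
  | false => B

instance AmalgamFam.group (A B : Type) [Group A] [Group B] :
    (i : Bool) → Group (AmalgamFam A B i)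
  | true => inferInstanceAs (Group A)
  | false => inferInstanceAs (Group B)

/-- The pair of homomorphisms `ιA : C →* A`, `ιB : C →* B` as a family. -/
def amalgamMaps {A B C : Type} [Group A] [Group B] [Group C]
    (ιA : C →* A) (ιB : C →* B) : (i : Bool) → C →* AmalgamFam A B i
  | true => ιA
  | false => ιB

/-- The amalgamated free product `A *_C B`, i.e. the pushout of `ιA` and `ιB`. -/
def Amalgam {A B C : Type} [Group A] [Group B] [Group C]
    (ιA : C →* A) (ιB : C →* B) : Type :=
  Monoid.PushoutI (amalgamMaps ιA ιB)

instance {A B C : Type} [Group A] [Group B] [Group C] (ιA : C →* A) (ιB : C →* B) :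
    Group (Amalgam ιA ιB) :=
  inferInstanceAs (Group (Monoid.PushoutI _))

/-- The canonical homomorphism `A →* A *_C B`. -/
def Amalgam.inA {A B C : Type} [Group A] [Group B] [Group C]
    (ιA : C →* A) (ιB : C →* B) : A →* Amalgam ιA ιB :=
  Monoid.PushoutI.of (φ := amalgamMaps ιA ιB) true

/-- The canonical homomorphism `B →* A *_C B`. -/
def Amalgam.inB {A B C : Type} [Group A] [Group B] [Group C]
    (ιA : C →* A) (ιB : C →* B) : B →* Amalgam ιA ιB :=
  Monoid.PushoutI.of (φ := amalgamMaps ιA ιB) false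

/-- The canonical homomorphism `C →* A *_C B`. -/
def Amalgam.inC {A B C : Type} [Group A] [Group B] [Group C]
    (ιA : C →* A) (ιB : C →* B) : C →* Amalgam ιA ιB :=
  (Amalgam.inA ιA ιB).comp ιA

/-!
Write `x ∉ A` as `x = u · w` with `u ∈ A` and `w` a nonempty reduced word whose first letter
is not in `A`, and let `a ∈ A` have order `q`; then `x⁻¹ a x = w⁻¹ a' w` with `a' = u⁻¹ a u`.
If `a' ∉ C`, the palindrome `w⁻¹ a' w` is a reduced word of length at least three, so it does
not lie in a factor. If `a' ∈ C`, read it in `B` and conjugate it by the first letter `b ∉ C`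
of `w`: because `C = N_B(S_q)` and `S_q` is the only subgroup of order `q` of `C`, the letter
`b⁻¹ a' b` is not in `C`, and the rest of `w` again produces a reduced palindrome.
-/

namespace Monoid.PushoutI

open CoprodI

variable {ι : Type*} {G : ι → Type*} {H : Type*} [∀ i, Group (G i)] [Group H]
  {φ : ∀ i, H →* G i}

theorem NormalWord.Transversal.eq_one_of_mem_range (d : NormalWord.Transversal φ) {i : ι}
    {g : G i} (hg : g ∈ d.set i) (hr : g ∈ (φ i).range) : g = 1 := by
  have h := ((d.compl i).coe_equiv_snd_eq_one_iff_mem (d.one_mem i)).2 hr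
  rwa [(d.compl i).equiv_snd_eq_self_of_mem_of_one_mem (φ i).range.one_mem hg] at h

theorem NormalWord.reduced {d : NormalWord.Transversal φ} (w : NormalWord d) :
    Reduced φ w.toWord :=
  fun g hg hr => w.ne_one g hg (d.eq_one_of_mem_range (w.normalized _ _ hg) hr)

theorem exists_base_mul_reduced_eq (hφ : ∀ i, Function.Injective (φ i)) (x : PushoutI φ) :
    ∃ (h : H) (w : Word G), Reduced φ w ∧ base φ h * ofCoprodI w.prod = x := by
  classical
  obtain ⟨d⟩ := NormalWord.transversal_nonempty φ hφ
  let n : NormalWord d := x • .empty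
  refine ⟨n.head, n.toWord, n.reduced, ?_⟩
  change n.prod = x
  rw [NormalWord.prod_smul, NormalWord.prod_empty, mul_one]

theorem reduced_cons_iff {i : ι} {g : G i} {w : Word G} {hw : w.fstIdx ≠ some i}
    {hg : g ≠ 1} : Reduced φ (Word.cons g w hw hg) ↔ g ∉ (φ i).range ∧ Reduced φ w := by
  simp [Reduced]

theorem reduced_toWord_singleton_iff {i : ι} {g : G i} {hg : g ≠ 1} :
    Reduced φ (NeWord.singleton g hg).toWord ↔ g ∉ (φ i).range := by
  simp [Reduced, NeWord.toWord]

theorem reduced_toWord_append_iff {i j k l : ι} {w₁ : NeWord G i j} {hne : j ≠ k}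
    {w₂ : NeWord G k l} :
    Reduced φ (w₁.append hne w₂).toWord ↔ Reduced φ w₁.toWord ∧ Reduced φ w₂.toWord := by
  simp only [Reduced, NeWord.toWord, NeWord.toList, List.mem_append, or_imp, forall_and]

theorem Reduced.neWord_inv {i j : ι} {w : NeWord G i j} (hw : Reduced φ w.toWord) :
    Reduced φ w.inv.toWord := by
  induction w with
  | singleton g hg =>
    rw [reduced_toWord_singleton_iff] at hw
    exact reduced_toWord_singleton_iff.2 fun h => hw (by simpa using inv_mem h)
  | append w₁ hne w₂ ih₁ ih₂ =>
    rw [reduced_toWord_append_iff] at hw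
    exact reduced_toWord_append_iff.2 ⟨ih₂ hw.2, ih₁ hw.1⟩

theorem mem_range_of_of_mem_range (hφ : ∀ i, Function.Injective (φ i)) {i j : ι}
    (hij : i ≠ j) {b : G j} (h : of (φ := φ) j b ∈ (of (φ := φ) i).range) :
    b ∈ (φ j).range := by
  obtain ⟨c, hc⟩ : of (φ := φ) j b ∈ (base φ).range := by
    rw [← inf_of_range_eq_base_range hφ hij]
    exact ⟨h, b, rfl⟩
  rw [← of_apply_eq_base φ j] at hc
  exact ⟨c, of_injective hφ j hc⟩

theorem Reduced.eq_empty_of_fstIdx_ne (hφ : ∀ i, Function.Injective (φ i)) {w : Word G}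
    (hw : Reduced φ w) {k : ι} (hfst : w.fstIdx ≠ some k)
    (h : ofCoprodI w.prod ∈ (of (φ := φ) k).range) : w = .empty := by
  obtain ⟨a, ha⟩ := h
  by_cases har : a ∈ (φ k).range
  · obtain ⟨c, rfl⟩ := har
    exact hw.eq_empty_of_mem_range hφ ⟨c, by rw [← ha, of_apply_eq_base]⟩
  · -- otherwise prepending the letter `a⁻¹` gives a nonempty reduced word with product `1`
    have ha1 : a⁻¹ ≠ 1 := fun h => har (by rw [inv_eq_one.1 h]; exact one_mem _)
    have hw' : Reduced φ (Word.cons a⁻¹ w hfst ha1) :=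
      reduced_cons_iff.2 ⟨fun h => har (by simpa using inv_mem h), hw⟩
    have := hw'.eq_empty_of_mem_range hφ ⟨1, by simp [← ha]⟩
    simpa using congrArg Word.toList this

theorem Reduced.length_le_one (hφ : ∀ i, Function.Injective (φ i)) {w : Word G}
    (hw : Reduced φ w) {k : ι} (h : ofCoprodI w.prod ∈ (of (φ := φ) k).range) :
    w.toList.length ≤ 1 := by
  cases w using Word.consRecOn with
  | empty => simp
  | cons j g t hfst hg1 =>
    by_cases hjk : j = k
    · subst hjk
      have ht : t = .empty := (reduced_cons_iff.1 hw).2.eq_empty_of_fstIdx_ne hφ hfst (by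
        rw [Word.prod_cons, map_mul, ofCoprodI_of] at h
        simpa using mul_mem (inv_mem (MonoidHom.mem_range.2 ⟨g, rfl⟩)) h)
      simp [ht]
    · have := hw.eq_empty_of_fstIdx_ne hφ (by simpa using hjk) h
      simpa using congrArg Word.toList this

theorem Reduced.conj_of_notMem_range (hφ : ∀ i, Function.Injective (φ i))
    {w : Word G} (hw : Reduced φ w) (hne : w ≠ .empty) {m : ι} (hfst : w.fstIdx ≠ some m)
    {b : G m} (hb : b ∉ (φ m).range) (i : ι) :
    (ofCoprodI w.prod)⁻¹ * of (φ := φ) m b * ofCoprodI w.prod ∉ (of (φ := φ) i).range := by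
  obtain ⟨k, l, w, rfl⟩ := NeWord.of_word w hne
  have hkm : k ≠ m := by
    rintro rfl
    exact hfst (by simp [Word.fstIdx, NeWord.toWord])
  let P := (w.inv.append hkm (.singleton b fun h => hb (h ▸ (φ m).range.one_mem))).append
    hkm.symm w
  have hP : Reduced φ P.toWord := reduced_toWord_append_iff.2
    ⟨reduced_toWord_append_iff.2 ⟨hw.neWord_inv, reduced_toWord_singleton_iff.2 hb⟩, hw⟩
  have hprod : ofCoprodI (φ := φ) P.toWord.prod =
      (ofCoprodI w.toWord.prod)⁻¹ * of (φ := φ) m b * ofCoprodI w.toWord.prod := by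
    change ofCoprodI P.prod = _
    simp only [P, NeWord.append_prod, NeWord.inv_prod, NeWord.prod_singleton, map_mul, map_inv,
      ofCoprodI_of]
    rfl
  intro hmem
  have hlen := hP.length_le_one hφ (hprod ▸ hmem)
  have h₁ := List.length_pos_of_ne_nil w.inv.toList_ne_nil
  have h₂ := List.length_pos_of_ne_nil w.toList_ne_nil
  simp only [P, NeWord.toWord, NeWord.toList, List.length_append, List.length_singleton] at hlen
  omega

theorem exists_of_mul_reduced_eq_of_notMem_range (hφ : ∀ i, Function.Injective (φ i)) {i : ι}
    {x : PushoutI φ} (hx : x ∉ (of (φ := φ) i).range) :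
    ∃ (u : G i) (w : Word G), Reduced φ w ∧ w ≠ .empty ∧ w.fstIdx ≠ some i ∧
      of (φ := φ) i u * ofCoprodI w.prod = x := by
  obtain ⟨h, w, hw, rfl⟩ := exists_base_mul_reduced_eq hφ x
  cases w using Word.consRecOn with
  | empty => exact absurd ⟨φ i h, by simp [of_apply_eq_base]⟩ hx
  | cons j g t hfst hg1 =>
    by_cases hji : j = i
    · subst hji
      refine ⟨φ j h * g, t, (reduced_cons_iff.1 hw).2, ?_, hfst, ?_⟩
      · rintro rfl
        exact hx ⟨φ j h * g, by simp [of_apply_eq_base]⟩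
      · simp [of_apply_eq_base, mul_assoc]
    · exact ⟨φ i h, _, hw, fun h => by simpa using congrArg Word.toList h, by simpa using hji,
        by rw [of_apply_eq_base]⟩

variable {r : ℕ} {i : ι}

theorem Reduced.conj_of_orderOf_eq (hφ : ∀ i, Function.Injective (φ i))
    (hmal : ∀ j ≠ i, ∀ c : H, orderOf c = r → ∀ g : G j, g ∉ (φ j).range →
      g⁻¹ * φ j c * g ∉ (φ j).range)
    {w : Word G} (hw : Reduced φ w) (hne : w ≠ .empty) (hfst : w.fstIdx ≠ some i)
    {a : G i} (hord : orderOf a = r) :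
    (ofCoprodI w.prod)⁻¹ * of (φ := φ) i a * ofCoprodI w.prod ∉ (of (φ := φ) i).range := by
  by_cases har : a ∈ (φ i).range
  · obtain ⟨c, rfl⟩ := har
    cases w using Word.consRecOn with
    | empty => exact absurd rfl hne
    | cons j g t htfst hg1 =>
      obtain ⟨hgr, ht⟩ := reduced_cons_iff.1 hw
      have hji : j ≠ i := by simpa using hfst
      have hb := hmal j hji c (by rwa [orderOf_injective _ (hφ i)] at hord) g hgr
      have hconj : (ofCoprodI (Word.cons g t htfst hg1).prod)⁻¹ * of (φ := φ) i (φ i c) *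
          ofCoprodI (Word.cons g t htfst hg1).prod =
          (ofCoprodI t.prod)⁻¹ * of (φ := φ) j (g⁻¹ * φ j c * g) * ofCoprodI t.prod := by
        simp only [Word.prod_cons, map_mul, map_inv, ofCoprodI_of, of_apply_eq_base]
        group
      rw [hconj]
      by_cases hte : t = .empty
      · subst hte
        simpa using fun h => hb (mem_range_of_of_mem_range hφ (Ne.symm hji) h)
      · exact ht.conj_of_notMem_range hφ hte htfst hb i
  · exact hw.conj_of_notMem_range hφ hne hfst har i

theorem conj_notMem_range_of_orderOf_eq (hφ : ∀ i, Function.Injective (φ i))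
    (hmal : ∀ j ≠ i, ∀ c : H, orderOf c = r → ∀ g : G j, g ∉ (φ j).range →
      g⁻¹ * φ j c * g ∉ (φ j).range)
    {x g : PushoutI φ} (hx : x ∉ (of (φ := φ) i).range) (hg : g ∈ (of (φ := φ) i).range)
    (hord : orderOf g = r) : x⁻¹ * g * x ∉ (of (φ := φ) i).range := by
  obtain ⟨a, rfl⟩ := hg
  obtain ⟨u, w, hw, hne, hfst, rfl⟩ := exists_of_mul_reduced_eq_of_notMem_range hφ hx
  rw [orderOf_injective _ (of_injective hφ i)] at hord
  have hconj := hw.conj_of_orderOf_eq hφ hmal hne hfst (a := u⁻¹ * a * u)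
    (by simpa using ((SemiconjBy.conj_mk u⁻¹ a).orderOf_eq).symm.trans hord)
  intro hmem
  refine hconj ?_
  convert hmem using 1
  simp only [map_mul, map_inv]
  group

end Monoid.PushoutI

open Subgroup in
theorem Subgroup.inv_mul_mul_notMem_of_normalizer_eq {Γ : Type*} [Group Γ] {R S : Subgroup Γ}
    {r : ℕ} (huniq : ∀ D : Subgroup Γ, D ≤ R → Nat.card D = r → D = S)
    (hnorm : normalizer (S : Set Γ) = R) {a g : Γ} (ha : a ∈ R) (hord : orderOf a = r)
    (hg : g ∉ R) : g⁻¹ * a * g ∉ R := by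
  intro hconj
  have hzpowers : ∀ b ∈ R, orderOf b = r → zpowers b = S := fun b hb hbr =>
    huniq _ (zpowers_le.2 hb) (by rw [Nat.card_zpowers, hbr])
  have hconj' : MulAut.conj g⁻¹ a ∈ R := by simpa using hconj
  apply hg
  rw [← hnorm, ← inv_mem_iff, mem_normalizer_iff_map_conj_eq, ← hzpowers a ha hord,
    MonoidHom.map_zpowers]
  exact (hzpowers _ hconj' (by rw [MulEquiv.orderOf_eq, hord])).trans (hzpowers a ha hord).symm

theorem amalgam_conjugate_intersection_general
    (p q : ℕ)
    {A B C : Type} [Group A] [Group B] [Group C]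
    (ιA : C →* A) (ιB : C →* B)
    (hιA : Function.Injective ιA) (hιB : Function.Injective ιB)
    -- `SpA` is the unique subgroup of order `p` of `ιA(C)`, and
    -- `SqB` is the unique subgroup of order `q` of `ιB(C)`
    (SpA : Subgroup A)
    (hSpA_uniq : ∀ D : Subgroup A, D ≤ ιA.range → Nat.card D = p → D = SpA)
    (SqB : Subgroup B)
    (hSqB_uniq : ∀ D : Subgroup B, D ≤ ιB.range → Nat.card D = q → D = SqB)
    -- the normalizer conditions `N_B(S_q) = ιB(C)` and `N_A(S_p) = ιA(C)`
    (hSqB_norm : Subgroup.normalizer (SqB : Set B) = ιB.range)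
    (hSpA_norm : Subgroup.normalizer (SpA : Set A) = ιA.range)
    :
    (∀ x : Amalgam ιA ιB, x ∉ (Amalgam.inA ιA ιB).range →
      ∀ g : Amalgam ιA ιB, g ∈ (Amalgam.inA ιA ιB).range →
        x⁻¹ * g * x ∈ (Amalgam.inA ιA ιB).range → orderOf g ≠ q) ∧
    (∀ y : Amalgam ιA ιB, y ∉ (Amalgam.inB ιA ιB).range →
      ∀ g : Amalgam ιA ιB, g ∈ (Amalgam.inB ιA ιB).range →
        y⁻¹ * g * y ∈ (Amalgam.inB ιA ιB).range → orderOf g ≠ p) := by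
  have hφ : ∀ b, Function.Injective (amalgamMaps ιA ιB b) := by rintro (_ | _) <;> assumption
  refine ⟨fun x hx g hg hconj hord =>
      Monoid.PushoutI.conj_notMem_range_of_orderOf_eq hφ (i := true) ?_ hx hg hord hconj,
    fun y hy g hg hconj hord =>
      Monoid.PushoutI.conj_notMem_range_of_orderOf_eq hφ (i := false) ?_ hy hg hord hconj⟩
  · rintro (_ | _) hj c hc g hg
    · exact Subgroup.inv_mul_mul_notMem_of_normalizer_eq hSqB_uniq hSqB_norm ⟨c, rfl⟩
        ((orderOf_injective ιB hιB c).trans hc) hg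
    · exact absurd rfl hj
  · rintro (_ | _) hj c hc g hg
    · exact absurd rfl hj
    · exact Subgroup.inv_mul_mul_notMem_of_normalizer_eq hSpA_uniq hSpA_norm ⟨c, rfl⟩
        ((orderOf_injective ιA hιA c).trans hc) hg

/-- For every `x ∈ X` not lying in (the image of) `A`, the intersection `A ∩ xAx⁻¹`
contains no element of order `q`; symmetrically, for every `y ∈ X` not lying in `B`,
the intersection `B ∩ yBy⁻¹` contains no element of order `p`. -/
theorem amalgam_conjugate_intersection
    (p q : ℕ) (hp : p.Prime) (hq : q.Prime) (hpodd : Odd p) (hqodd : Odd q)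
    (hpq : p ≠ q)
    {A B C : Type} [Group A] [Group B] [Group C] [Finite A] [Finite B]
    -- `Q` is a nonabelian normal Sylow `q`-subgroup of `A`,
    -- `P` is a nonabelian normal Sylow `p`-subgroup of `B`
    (Q : Sylow q A) (P : Sylow p B)
    (hQnormal : (Q : Subgroup A).Normal) (hPnormal : (P : Subgroup B).Normal)
    (hQnonab : ¬ IsMulCommutative (Q : Subgroup A))
    (hPnonab : ¬ IsMulCommutative (P : Subgroup B))
    -- `ZQ = Z(Q)` has order `q` and `ZP = Z(P)` has order `p`
    (ZQ : Subgroup A)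
    (hZQ : ZQ = (Q : Subgroup A) ⊓ Subgroup.centralizer ((Q : Subgroup A) : Set A))
    (hZQcard : Nat.card ZQ = q)
    (ZP : Subgroup B)
    (hZP : ZP = (P : Subgroup B) ⊓ Subgroup.centralizer ((P : Subgroup B) : Set B))
    (hZPcard : Nat.card ZP = p)
    -- `C` is cyclic of order `p * q`, embedded in `A` and `B`
    (hC : IsCyclic C) (hCcard : Nat.card C = p * q)
    (ιA : C →* A) (ιB : C →* B)
    (hιA : Function.Injective ιA) (hιB : Function.Injective ιB)
    -- `ιA(C)` is self-normalizing in `A`, contains `Z(Q)` as its unique subgroup of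
    -- order `q`, and `A = Q * ιA(C)`
    (hCA_selfnorm : Subgroup.normalizer (ιA.range : Set A) = ιA.range)
    (hZQle : ZQ ≤ ιA.range)
    (hZQuniq : ∀ D : Subgroup A, D ≤ ιA.range → Nat.card D = q → D = ZQ)
    (hAfact : ∀ a : A, ∃ u ∈ (Q : Subgroup A), ∃ c : C, a = u * ιA c)
    -- `ιB(C)` is self-normalizing in `B`, contains `Z(P)` as its unique subgroup of
    -- order `p`, and `B = P * ιB(C)`
    (hCB_selfnorm : Subgroup.normalizer (ιB.range : Set B) = ιB.range)
    (hZPle : ZP ≤ ιB.range)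
    (hZPuniq : ∀ D : Subgroup B, D ≤ ιB.range → Nat.card D = p → D = ZP)
    (hBfact : ∀ b : B, ∃ u ∈ (P : Subgroup B), ∃ c : C, b = u * ιB c)
    -- `SpA` is the unique subgroup of order `p` of `ιA(C)`, and
    -- `SqB` is the unique subgroup of order `q` of `ιB(C)`
    (SpA : Subgroup A) (hSpA_le : SpA ≤ ιA.range) (hSpA_card : Nat.card SpA = p)
    (hSpA_uniq : ∀ D : Subgroup A, D ≤ ιA.range → Nat.card D = p → D = SpA)
    (SqB : Subgroup B) (hSqB_le : SqB ≤ ιB.range) (hSqB_card : Nat.card SqB = q)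
    (hSqB_uniq : ∀ D : Subgroup B, D ≤ ιB.range → Nat.card D = q → D = SqB)
    -- the normalizer conditions `N_B(S_q) = ιB(C)` and `N_A(S_p) = ιA(C)`
    (hSqB_norm : Subgroup.normalizer (SqB : Set B) = ιB.range)
    (hSpA_norm : Subgroup.normalizer (SpA : Set A) = ιA.range)
    -- the commutator conditions `[Q, S_p] = Q` and `[P, S_q] = P`
    (hQcommutator : ⁅(Q : Subgroup A), SpA⁆ = (Q : Subgroup A))
    (hPcommutator : ⁅(P : Subgroup B), SqB⁆ = (P : Subgroup B))
    :
    (∀ x : Amalgam ιA ιB, x ∉ (Amalgam.inA ιA ιB).range →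
      ∀ g : Amalgam ιA ιB, g ∈ (Amalgam.inA ιA ιB).range →
        x⁻¹ * g * x ∈ (Amalgam.inA ιA ιB).range → orderOf g ≠ q) ∧
    (∀ y : Amalgam ιA ιB, y ∉ (Amalgam.inB ιA ιB).range →
      ∀ g : Amalgam ιA ιB, g ∈ (Amalgam.inB ιA ιB).range →
        y⁻¹ * g * y ∈ (Amalgam.inB ιA ιB).range → orderOf g ≠ p) :=
  amalgam_conjugate_intersection_general p q ιA ιB hιA hιB SpA hSpA_uniq SqB hSqB_uniq hSqB_norm
    hSpA_norm
end

section
/- For every nonidentity element z of Z(Q), the centralizer of z in X equals A: C_X(z) = A. Symmetrically, for every nonidentity element w of Z(P), C_X(w) = B. -/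
/-!
Write `z = ιA c`. As `A = Q · ιA(C)` with `C` abelian and `z ∈ Z(Q)`, `z` is central in `A`, so
`A ≤ C_X(z)`. Conversely, an element of `C_X(z)` has the normal form `h · g₁ ⋯ gₙ` with `h ∈ C`,
consecutive letters from different factors and no letter in `C`. Dropping a trailing letter from
`A` (which commutes with `z`), the word still commutes with `z` and, if nonempty, ends with a letter
`g ∈ B \ ιB(C)`. Then `g z g⁻¹ ∉ ιB(C)`: otherwise it would generate, like `z`, the unique subgroup
`S_q` of order `q` of `ιB(C)`, so `g ∈ N_B(S_q) = ιB(C)`. Hence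
`g₁ ⋯ gₙ₋₁ (g z g⁻¹) gₙ₋₁⁻¹ ⋯ g₁⁻¹` is a nonempty reduced word representing `z ∈ C`, which the
normal form theorem forbids.
-/

namespace Monoid.PushoutI

open Function

variable {ι : Type*} {G : ι → Type*} [∀ i, Group (G i)] {H : Type*} [Group H]
  {φ : ∀ i, H →* G i}

variable (φ) in
def listProd (l : List (Σ i, G i)) : PushoutI φ :=
  (l.map fun g => of g.1 g.2).prod

@[simp]
lemma listProd_append (l₁ l₂ : List (Σ i, G i)) :
    listProd φ (l₁ ++ l₂) = listProd φ l₁ * listProd φ l₂ := by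
  simp [listProd]

@[simp]
lemma listProd_singleton (g : Σ i, G i) : listProd φ [g] = of g.1 g.2 := by
  simp [listProd]

lemma listProd_reverse_map_inv (l : List (Σ i, G i)) :
    listProd φ (l.reverse.map fun g => ⟨g.1, g.2⁻¹⟩) = (listProd φ l)⁻¹ := by
  simp [listProd, List.prod_inv_reverse, List.map_reverse, Function.comp_def]

lemma listProd_eq_ofCoprodI (l : List (Σ i, G i)) :
    listProd φ l = ofCoprodI (l.map fun g => CoprodI.of g.2).prod := by
  simp [listProd, map_list_prod, Function.comp_def]

variable (φ) in
def IsReducedList (l : List (Σ i, G i)) : Prop :=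
  l.IsChain (fun a b => a.1 ≠ b.1) ∧ ∀ g ∈ l, g.2 ∉ (φ g.1).range

lemma IsReducedList.of_append_left {l₁ l₂ : List (Σ i, G i)}
    (hl : IsReducedList φ (l₁ ++ l₂)) : IsReducedList φ l₁ :=
  ⟨(List.isChain_append.1 hl.1).1, fun g hg => hl.2 g (List.mem_append_left _ hg)⟩

lemma IsReducedList.eq_nil_of_listProd_mem_range (hφ : ∀ i, Injective (φ i))
    {l : List (Σ i, G i)} (hl : IsReducedList φ l) (h : listProd φ l ∈ (base φ).range) :
    l = [] := by
  let w : CoprodI.Word G := ⟨l, fun g hg h1 => hl.2 g hg (h1 ▸ one_mem _), hl.1⟩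
  have hw : Reduced φ w := hl.2
  exact congrArg CoprodI.Word.toList (hw.eq_empty_of_mem_range hφ (by
    rwa [listProd_eq_ofCoprodI] at h))

lemma IsReducedList.append_cons_reverse_map_inv {l : List (Σ i, G i)} (hl : IsReducedList φ l)
    {j : ι} {b : G j} (hb : b ∉ (φ j).range) (hlast : ∀ g ∈ l.getLast?, g.1 ≠ j) :
    IsReducedList φ (l ++ ⟨j, b⟩ :: l.reverse.map fun g => ⟨g.1, g.2⁻¹⟩) := by
  obtain ⟨hchain, hred⟩ := hl
  refine ⟨List.isChain_append.2 ⟨hchain, List.isChain_cons.2 ⟨?_, ?_⟩, ?_⟩, ?_⟩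
  · intro g hg
    simp only [List.head?_map, List.head?_reverse, Option.mem_def, Option.map_eq_some_iff] at hg
    obtain ⟨g', hg', rfl⟩ := hg
    exact (hlast g' hg').symm
  · exact (List.isChain_map _).2 (List.isChain_reverse.2 (hchain.imp fun _ _ h => h.symm))
  · intro g hg y hy
    simp only [List.head?_cons, Option.mem_def, Option.some.injEq] at hy
    exact hy ▸ hlast g hg
  · simp only [List.mem_append, List.mem_cons, List.mem_map, List.mem_reverse]
    rintro g (hg | rfl | ⟨g', hg', rfl⟩)
    exacts [hred g hg, hb, fun h => hred g' hg' (inv_mem_iff.1 h)]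

lemma listProd_mul_of_mul_inv_notMem_range (hφ : ∀ i, Injective (φ i))
    {l : List (Σ i, G i)} (hl : IsReducedList φ l) {j : ι} {b : G j} (hb : b ∉ (φ j).range)
    (hlast : ∀ g ∈ l.getLast?, g.1 ≠ j) :
    listProd φ l * of j b * (listProd φ l)⁻¹ ∉ (base φ).range := by
  intro h
  have := (hl.append_cons_reverse_map_inv hb hlast).eq_nil_of_listProd_mem_range hφ (by
    rwa [← List.singleton_append, listProd_append, listProd_append, listProd_singleton,
      listProd_reverse_map_inv, ← mul_assoc])
  simp at this

lemma exists_eq_base_mul_listProd (hφ : ∀ i, Injective (φ i)) (x : PushoutI φ) :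
    ∃ h l, IsReducedList φ l ∧ x = base φ h * listProd φ l := by
  classical
  obtain ⟨d⟩ := NormalWord.transversal_nonempty φ hφ
  let w := NormalWord.equiv (d := d) x
  refine ⟨w.head, w.toList, ⟨w.chain_ne, fun ⟨i, g⟩ hg hrange => w.ne_one _ hg ?_⟩, ?_⟩
  · have hset := (d.compl i).equiv_snd_eq_self_of_mem_of_one_mem (one_mem _) (w.normalized i g hg)
    rw [(d.compl i).equiv_snd_eq_one_of_mem_of_one_mem (d.one_mem i) hrange] at hset
    exact (congrArg Subtype.val hset).symm
  · rw [listProd_eq_ofCoprodI]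
    exact ((NormalWord.equiv (d := d)).symm_apply_apply x).symm

section Centralizer

variable {i : ι} {c : H}

lemma not_commute_listProd_base
    (hφ : ∀ i, Injective (φ i))
    (hmal : ∀ j ≠ i, ∀ g : G j, g * φ j c * g⁻¹ ∈ (φ j).range → g ∈ (φ j).range)
    {l : List (Σ i, G i)} {j : ι} {g : G j} (hl : IsReducedList φ (l ++ [⟨j, g⟩]))
    (hj : j ≠ i) : ¬ Commute (listProd φ (l ++ [⟨j, g⟩])) (base φ c) := by
  intro hcomm
  have hg : g ∉ (φ j).range := hl.2 ⟨j, g⟩ (by simp)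
  have hlast := (List.isChain_append.1 hl.1).2.2
  refine listProd_mul_of_mul_inv_notMem_range hφ hl.of_append_left (fun h => hg (hmal j hj g h))
    (fun x hx => hlast x hx _ rfl) ⟨c, ?_⟩
  rw [listProd_append, listProd_singleton] at hcomm
  rw [map_mul, map_mul, map_inv, of_apply_eq_base]
  calc base φ c = (listProd φ l * of j g) * base φ c * (listProd φ l * of j g)⁻¹ :=
        hcomm.mul_inv_cancel.symm
    _ = _ := by group

lemma listProd_mem_range_of_commute
    (hφ : ∀ i, Injective (φ i))
    (hmal : ∀ j ≠ i, ∀ g : G j, g * φ j c * g⁻¹ ∈ (φ j).range → g ∈ (φ j).range)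
    (hc : ∀ g : G i, Commute g (φ i c))
    {l : List (Σ i, G i)} (hl : IsReducedList φ l) (hlc : Commute (listProd φ l) (base φ c)) :
    listProd φ l ∈ (of i).range := by
  rcases l.eq_nil_or_concat with rfl | ⟨l, ⟨j, g⟩, rfl⟩
  · exact one_mem _
  rw [List.concat_eq_append] at hl hlc ⊢
  by_cases hj : j = i
  · subst hj
    rw [listProd_append]
    refine mul_mem ?_ (by rw [listProd_singleton]; exact ⟨g, rfl⟩)
    rcases l.eq_nil_or_concat with rfl | ⟨l, ⟨k, g'⟩, rfl⟩
    · exact one_mem _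
    rw [List.concat_eq_append] at hl hlc ⊢
    have hk : k ≠ j := (List.isChain_append.1 hl.1).2.2 ⟨k, g'⟩ (by simp) ⟨j, g⟩ rfl
    have hgc : Commute (of j g) (base φ c) := by
      rw [← of_apply_eq_base φ j]; exact (hc g).map (of j)
    refine absurd ?_ (not_commute_listProd_base hφ hmal hl.of_append_left hk)
    rw [listProd_append, listProd_singleton] at hlc
    simpa using hlc.mul_left hgc.inv_left
  · exact absurd hlc (not_commute_listProd_base hφ hmal hl hj)

theorem centralizer_base_eq_range_of
    (hφ : ∀ i, Injective (φ i))
    (hmal : ∀ j ≠ i, ∀ g : G j, g * φ j c * g⁻¹ ∈ (φ j).range → g ∈ (φ j).range)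
    (hc : ∀ g : G i, Commute g (φ i c)) :
    Subgroup.centralizer {base φ c} = (of i).range := by
  refine le_antisymm (fun x hx => ?_) ?_
  · obtain ⟨h, l, hl, rfl⟩ := exists_eq_base_mul_listProd hφ x
    have hhc : Commute h c := hφ i (by simpa only [map_mul] using (hc (φ i h)).eq)
    have hxc : Commute (base φ h * listProd φ l) (base φ c) :=
      Subgroup.mem_centralizer_singleton_iff.1 hx
    have hlc : Commute (listProd φ l) (base φ c) := by
      simpa using (hhc.map (base φ)).inv_left.mul_left hxc
    exact mul_mem ⟨φ i h, of_apply_eq_base φ i h⟩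
      (listProd_mem_range_of_commute hφ hmal hc hl hlc)
  · rintro _ ⟨g, rfl⟩
    rw [Subgroup.mem_centralizer_singleton_iff, ← of_apply_eq_base φ i]
    exact ((hc g).map (of i)).eq

end Centralizer

end Monoid.PushoutI

namespace Subgroup

variable {G : Type*} [Group G]

lemma orderOf_eq_of_natCard_eq_prime {K : Subgroup G} {p : ℕ} (hp : p.Prime)
    (hK : Nat.card K = p) {x : G} (hx : x ∈ K) (hx1 : x ≠ 1) : orderOf x = p :=
  ((Nat.dvd_prime hp).1 (hK ▸ K.orderOf_dvd_natCard hx)).resolve_left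
    (mt orderOf_eq_one_iff.1 hx1)

lemma apply_mem_center_of_mem_centralizer {C : Type*} [Group C] [IsMulCommutative C]
    {K : Subgroup G} {f : C →* G} (hKf : ∀ g : G, ∃ u ∈ K, ∃ c, g = u * f c) {c : C}
    (hc : f c ∈ centralizer (K : Set G)) : f c ∈ center G := by
  refine mem_center_iff.2 fun g => ?_
  obtain ⟨u, hu, c', rfl⟩ := hKf g
  have hcc' : Commute (f c') (f c) := by rw [Commute, SemiconjBy, ← map_mul, ← map_mul, mul_comm']
  have hcu : Commute u (f c) := mem_centralizer_iff.1 hc u hu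
  exact (hcu.mul_left hcc').eq

lemma mem_of_conj_mem_of_normalizer_eq {L S : Subgroup G} {n : ℕ}
    (hS : ∀ D : Subgroup G, D ≤ L → Nat.card D = n → D = S) (hN : normalizer (S : Set G) = L)
    {x : G} (hxL : x ∈ L) (hx : orderOf x = n) {g : G} (hg : g * x * g⁻¹ ∈ L) : g ∈ L := by
  have hconj : orderOf (g * x * g⁻¹) = n := by
    rw [← hx, ← MulAut.conj_apply, MulEquiv.orderOf_eq]
  have h1 : zpowers x = S := hS _ (zpowers_le.2 hxL) (by rw [Nat.card_zpowers, hx])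
  have h2 : zpowers (g * x * g⁻¹) = S := hS _ (zpowers_le.2 hg) (by rw [Nat.card_zpowers, hconj])
  have hmap : (zpowers x).map (MulAut.conj g).toMonoidHom = zpowers x := by
    rw [MonoidHom.map_zpowers]; exact h2.trans h1.symm
  rw [← hN, mem_normalizer_iff_conj_image_eq, ← h1]
  exact congrArg SetLike.coe hmap

end Subgroup

namespace Amalgam

open Monoid.PushoutI

variable {A B C : Type} [Group A] [Group B] [Group C] {ιA : C →* A} {ιB : C →* B}

lemma injective_amalgamMaps (hιA : Function.Injective ιA) (hιB : Function.Injective ιB) :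
    ∀ i, Function.Injective (amalgamMaps ιA ιB i)
  | true => hιA
  | false => hιB

theorem centralizer_inA_eq_range (hιA : Function.Injective ιA) (hιB : Function.Injective ιB)
    {c : C} (hc : ιA c ∈ Subgroup.center A)
    (hmal : ∀ b : B, b * ιB c * b⁻¹ ∈ ιB.range → b ∈ ιB.range) :
    Subgroup.centralizer {inA ιA ιB (ιA c)} = (inA ιA ιB).range :=
  (of_apply_eq_base (amalgamMaps ιA ιB) true c).symm ▸
    centralizer_base_eq_range_of (injective_amalgamMaps hιA hιB)
      (fun | false, _ => hmal | true, h => absurd rfl h) (Subgroup.mem_center_iff.1 hc)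

theorem centralizer_inB_eq_range (hιA : Function.Injective ιA) (hιB : Function.Injective ιB)
    {c : C} (hc : ιB c ∈ Subgroup.center B)
    (hmal : ∀ a : A, a * ιA c * a⁻¹ ∈ ιA.range → a ∈ ιA.range) :
    Subgroup.centralizer {inB ιA ιB (ιB c)} = (inB ιA ιB).range :=
  (of_apply_eq_base (amalgamMaps ιA ιB) false c).symm ▸
    centralizer_base_eq_range_of (injective_amalgamMaps hιA hιB)
      (fun | true, _ => hmal | false, h => absurd rfl h) (Subgroup.mem_center_iff.1 hc)

end Amalgam

theorem amalgam_centralizer_of_center_element_general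
    (p q : ℕ) (hp : p.Prime) (hq : q.Prime)
    {A B C : Type} [Group A] [Group B] [Group C]
    -- `Q` is a nonabelian normal Sylow `q`-subgroup of `A`,
    -- `P` is a nonabelian normal Sylow `p`-subgroup of `B`
    (Q : Sylow q A) (P : Sylow p B)
    -- `ZQ = Z(Q)` has order `q` and `ZP = Z(P)` has order `p`
    (ZQ : Subgroup A)
    (hZQ : ZQ = (Q : Subgroup A) ⊓ Subgroup.centralizer ((Q : Subgroup A) : Set A))
    (hZQcard : Nat.card ZQ = q)
    (ZP : Subgroup B)
    (hZP : ZP = (P : Subgroup B) ⊓ Subgroup.centralizer ((P : Subgroup B) : Set B))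
    (hZPcard : Nat.card ZP = p)
    -- `C` is cyclic of order `p * q`, embedded in `A` and `B`
    (hC : IsCyclic C)
    (ιA : C →* A) (ιB : C →* B)
    (hιA : Function.Injective ιA) (hιB : Function.Injective ιB)
    -- `ιA(C)` is self-normalizing in `A`, contains `Z(Q)` as its unique subgroup of
    -- order `q`, and `A = Q * ιA(C)`
    (hZQle : ZQ ≤ ιA.range)
    (hAfact : ∀ a : A, ∃ u ∈ (Q : Subgroup A), ∃ c : C, a = u * ιA c)
    -- `ιB(C)` is self-normalizing in `B`, contains `Z(P)` as its unique subgroup of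
    -- order `p`, and `B = P * ιB(C)`
    (hZPle : ZP ≤ ιB.range)
    (hBfact : ∀ b : B, ∃ u ∈ (P : Subgroup B), ∃ c : C, b = u * ιB c)
    -- `SpA` is the unique subgroup of order `p` of `ιA(C)`, and
    -- `SqB` is the unique subgroup of order `q` of `ιB(C)`
    (SpA : Subgroup A)
    (hSpA_uniq : ∀ D : Subgroup A, D ≤ ιA.range → Nat.card D = p → D = SpA)
    (SqB : Subgroup B)
    (hSqB_uniq : ∀ D : Subgroup B, D ≤ ιB.range → Nat.card D = q → D = SqB)
    -- the normalizer conditions `N_B(S_q) = ιB(C)` and `N_A(S_p) = ιA(C)`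
    (hSqB_norm : Subgroup.normalizer (SqB : Set B) = ιB.range)
    (hSpA_norm : Subgroup.normalizer (SpA : Set A) = ιA.range)
    :
    (∀ z : Amalgam ιA ιB, z ∈ ZQ.map (Amalgam.inA ιA ιB) → z ≠ 1 →
      Subgroup.centralizer {z} = (Amalgam.inA ιA ιB).range) ∧
    (∀ w : Amalgam ιA ιB, w ∈ ZP.map (Amalgam.inB ιA ιB) → w ≠ 1 →
      Subgroup.centralizer {w} = (Amalgam.inB ιA ιB).range) := by
  have hCcomm : IsMulCommutative C := hC.isMulCommutative
  constructor
  · rintro _ ⟨z, hz, rfl⟩ hz1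
    obtain ⟨c, rfl⟩ := hZQle hz
    have hord : orderOf c = q := by
      rw [← orderOf_injective ιA hιA]
      exact Subgroup.orderOf_eq_of_natCard_eq_prime hq hZQcard hz (by rintro h; simp [h] at hz1)
    exact Amalgam.centralizer_inA_eq_range hιA hιB
      (Subgroup.apply_mem_center_of_mem_centralizer hAfact (hZQ ▸ hz).2)
      (fun b => Subgroup.mem_of_conj_mem_of_normalizer_eq hSqB_uniq hSqB_norm ⟨c, rfl⟩
        (by rwa [orderOf_injective ιB hιB]))
  · rintro _ ⟨w, hw, rfl⟩ hw1
    obtain ⟨c, rfl⟩ := hZPle hw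
    have hord : orderOf c = p := by
      rw [← orderOf_injective ιB hιB]
      exact Subgroup.orderOf_eq_of_natCard_eq_prime hp hZPcard hw (by rintro h; simp [h] at hw1)
    exact Amalgam.centralizer_inB_eq_range hιA hιB
      (Subgroup.apply_mem_center_of_mem_centralizer hBfact (hZP ▸ hw).2)
      (fun a => Subgroup.mem_of_conj_mem_of_normalizer_eq hSpA_uniq hSpA_norm ⟨c, rfl⟩
        (by rwa [orderOf_injective ιA hιA]))

/-- For every nonidentity element `z` of `Z(Q)`, the centralizer of `z` in `X`
equals `A`; symmetrically, for every nonidentity element `w` of `Z(P)`, its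
centralizer in `X` equals `B`. -/
theorem amalgam_centralizer_of_center_element
    (p q : ℕ) (hp : p.Prime) (hq : q.Prime) (hpodd : Odd p) (hqodd : Odd q)
    (hpq : p ≠ q)
    {A B C : Type} [Group A] [Group B] [Group C] [Finite A] [Finite B]
    -- `Q` is a nonabelian normal Sylow `q`-subgroup of `A`,
    -- `P` is a nonabelian normal Sylow `p`-subgroup of `B`
    (Q : Sylow q A) (P : Sylow p B)
    (hQnormal : (Q : Subgroup A).Normal) (hPnormal : (P : Subgroup B).Normal)
    (hQnonab : ¬ IsMulCommutative (Q : Subgroup A))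
    (hPnonab : ¬ IsMulCommutative (P : Subgroup B))
    -- `ZQ = Z(Q)` has order `q` and `ZP = Z(P)` has order `p`
    (ZQ : Subgroup A)
    (hZQ : ZQ = (Q : Subgroup A) ⊓ Subgroup.centralizer ((Q : Subgroup A) : Set A))
    (hZQcard : Nat.card ZQ = q)
    (ZP : Subgroup B)
    (hZP : ZP = (P : Subgroup B) ⊓ Subgroup.centralizer ((P : Subgroup B) : Set B))
    (hZPcard : Nat.card ZP = p)
    -- `C` is cyclic of order `p * q`, embedded in `A` and `B`
    (hC : IsCyclic C) (hCcard : Nat.card C = p * q)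
    (ιA : C →* A) (ιB : C →* B)
    (hιA : Function.Injective ιA) (hιB : Function.Injective ιB)
    -- `ιA(C)` is self-normalizing in `A`, contains `Z(Q)` as its unique subgroup of
    -- order `q`, and `A = Q * ιA(C)`
    (hCA_selfnorm : Subgroup.normalizer (ιA.range : Set A) = ιA.range)
    (hZQle : ZQ ≤ ιA.range)
    (hZQuniq : ∀ D : Subgroup A, D ≤ ιA.range → Nat.card D = q → D = ZQ)
    (hAfact : ∀ a : A, ∃ u ∈ (Q : Subgroup A), ∃ c : C, a = u * ιA c)
    -- `ιB(C)` is self-normalizing in `B`, contains `Z(P)` as its unique subgroup of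
    -- order `p`, and `B = P * ιB(C)`
    (hCB_selfnorm : Subgroup.normalizer (ιB.range : Set B) = ιB.range)
    (hZPle : ZP ≤ ιB.range)
    (hZPuniq : ∀ D : Subgroup B, D ≤ ιB.range → Nat.card D = p → D = ZP)
    (hBfact : ∀ b : B, ∃ u ∈ (P : Subgroup B), ∃ c : C, b = u * ιB c)
    -- `SpA` is the unique subgroup of order `p` of `ιA(C)`, and
    -- `SqB` is the unique subgroup of order `q` of `ιB(C)`
    (SpA : Subgroup A) (hSpA_le : SpA ≤ ιA.range) (hSpA_card : Nat.card SpA = p)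
    (hSpA_uniq : ∀ D : Subgroup A, D ≤ ιA.range → Nat.card D = p → D = SpA)
    (SqB : Subgroup B) (hSqB_le : SqB ≤ ιB.range) (hSqB_card : Nat.card SqB = q)
    (hSqB_uniq : ∀ D : Subgroup B, D ≤ ιB.range → Nat.card D = q → D = SqB)
    -- the normalizer conditions `N_B(S_q) = ιB(C)` and `N_A(S_p) = ιA(C)`
    (hSqB_norm : Subgroup.normalizer (SqB : Set B) = ιB.range)
    (hSpA_norm : Subgroup.normalizer (SpA : Set A) = ιA.range)
    -- the commutator conditions `[Q, S_p] = Q` and `[P, S_q] = P`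
    (hQcommutator : ⁅(Q : Subgroup A), SpA⁆ = (Q : Subgroup A))
    (hPcommutator : ⁅(P : Subgroup B), SqB⁆ = (P : Subgroup B))
    :
    (∀ z : Amalgam ιA ιB, z ∈ ZQ.map (Amalgam.inA ιA ιB) → z ≠ 1 →
      Subgroup.centralizer {z} = (Amalgam.inA ιA ιB).range) ∧
    (∀ w : Amalgam ιA ιB, w ∈ ZP.map (Amalgam.inB ιA ιB) → w ≠ 1 →
      Subgroup.centralizer {w} = (Amalgam.inB ιA ιB).range) :=
  amalgam_centralizer_of_center_element_general p q hp hq Q P ZQ hZQ hZQcard ZP hZP hZPcard hC ιA ιB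
    hιA hιB hZQle hAfact hZPle hBfact SpA hSpA_uniq SqB hSqB_uniq hSqB_norm hSpA_norm
end
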